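/- On A ⊗_k S, define the multiplication (a ⊗ s)(b ⊗ t) := a·b_R ⊗ s_R·t. This multiplication is associative with unit 1_A ⊗ 1_S if and only if the following four conditions hold for all a, b ∈ A, s, t ∈ S: R(s ⊗ 1_A) = 1_A ⊗ s; R(1_S ⊗ a) = a ⊗ 1_S; R(st ⊗ a) = a_{Rr} ⊗ s_r t_R; R(s ⊗ ab) = a_R b_r ⊗ s_{Rr} (in which case (A,S,R) is called a factorization structure and A ⊗_k S with this product is the smash product A #_R S). -/
import Mathlib


open TensorProduct

noncomputable section

variable {k A S : Type*} [CommRing k] [Ring A] [Algebra k A] [Ring S] [Algebra k S]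

/-- The map `S ⊗ (A ⊗ S) → A ⊗ S`, `s ⊗ (b ⊗ t) ↦ b_R ⊗ s_R t`. -/
def factInner (R : S ⊗[k] A →ₗ[k] A ⊗[k] S) : S ⊗[k] (A ⊗[k] S) →ₗ[k] A ⊗[k] S :=
  LinearMap.lTensor A (LinearMap.mul' k S) ∘ₗ (TensorProduct.assoc k A S S).toLinearMap ∘ₗ
    LinearMap.rTensor S R ∘ₗ (TensorProduct.assoc k S A S).symm.toLinearMap

/-- The smash product multiplication on `A ⊗ S`:
`(a ⊗ s)(b ⊗ t) = a b_R ⊗ s_R t`. -/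
def factMul (R : S ⊗[k] A →ₗ[k] A ⊗[k] S) (x y : A ⊗[k] S) : A ⊗[k] S :=
  (LinearMap.rTensor S (LinearMap.mul' k A) ∘ₗ (TensorProduct.assoc k A A S).symm.toLinearMap ∘ₗ
    LinearMap.lTensor A (factInner R) ∘ₗ (TensorProduct.assoc k A S (A ⊗[k] S)).toLinearMap)
    (x ⊗ₜ[k] y)

/-- For `b : A`, the map `A ⊗ S → A ⊗ S`, `a ⊗ s ↦ a b_r ⊗ s_r`. -/
def factInner2 (R : S ⊗[k] A →ₗ[k] A ⊗[k] S) (b : A) : A ⊗[k] S →ₗ[k] A ⊗[k] S :=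
  LinearMap.rTensor S (LinearMap.mul' k A) ∘ₗ (TensorProduct.assoc k A A S).symm.toLinearMap ∘ₗ
    LinearMap.lTensor A (R ∘ₗ (TensorProduct.mk k S A).flip b)

namespace FactAux

variable (R : S ⊗[k] A →ₗ[k] A ⊗[k] S)

lemma mapmap (f f' : A →ₗ[k] A) (g g' : S →ₗ[k] S) (w : A ⊗[k] S) :
    TensorProduct.map f' g' (TensorProduct.map f g w)
      = TensorProduct.map (f' ∘ₗ f) (g' ∘ₗ g) w := by
  rw [TensorProduct.map_comp]; rfl

lemma mulmapA (a : A) (w : A ⊗[k] S) :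
    LinearMap.rTensor S (LinearMap.mul' k A) ((TensorProduct.assoc k A A S).symm (a ⊗ₜ[k] w)) =
      TensorProduct.map (LinearMap.mulLeft k a) LinearMap.id w := by
  induction w using TensorProduct.induction_on with
  | zero => rw [tmul_zero, LinearEquiv.map_zero, LinearMap.map_zero, LinearMap.map_zero]
  | tmul c u => simp [TensorProduct.assoc_symm_tmul, LinearMap.mul'_apply]
  | add x y hx hy => simp only [tmul_add, map_add, hx, hy]

lemma mulmapS (t : S) (w : A ⊗[k] S) :
    LinearMap.lTensor A (LinearMap.mul' k S) ((TensorProduct.assoc k A S S) (w ⊗ₜ[k] t)) =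
      TensorProduct.map LinearMap.id (LinearMap.mulRight k t) w := by
  induction w using TensorProduct.induction_on with
  | zero => rw [zero_tmul, LinearEquiv.map_zero, LinearMap.map_zero, LinearMap.map_zero]
  | tmul c u => simp [TensorProduct.assoc_tmul, LinearMap.mul'_apply]
  | add x y hx hy => simp only [add_tmul, map_add, hx, hy]

lemma factInner_tmul (s : S) (b : A) (t : S) :
    factInner R (s ⊗ₜ[k] (b ⊗ₜ[k] t))
      = TensorProduct.map LinearMap.id (LinearMap.mulRight k t) (R (s ⊗ₜ[k] b)) := by
  simp only [factInner, LinearMap.coe_comp, Function.comp_apply, LinearEquiv.coe_coe,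
    assoc_symm_tmul, LinearMap.rTensor_tmul]
  exact mulmapS t _

lemma factInner2_tmul (b a : A) (s : S) :
    factInner2 R b (a ⊗ₜ[k] s)
      = TensorProduct.map (LinearMap.mulLeft k a) LinearMap.id (R (s ⊗ₜ[k] b)) := by
  simp only [factInner2, LinearMap.coe_comp, Function.comp_apply, LinearEquiv.coe_coe,
    LinearMap.lTensor_tmul, LinearMap.flip_apply, TensorProduct.mk_apply]
  exact mulmapA _ _

lemma factMul_left (a : A) (s : S) (y : A ⊗[k] S) :
    factMul R (a ⊗ₜ[k] s) y
      = TensorProduct.map (LinearMap.mulLeft k a) LinearMap.id (factInner R (s ⊗ₜ[k] y)) := by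
  simp only [factMul, LinearMap.coe_comp, Function.comp_apply, LinearEquiv.coe_coe,
    assoc_tmul, LinearMap.lTensor_tmul]
  exact mulmapA _ _

lemma factMul_tmul (a b : A) (s t : S) :
    factMul R (a ⊗ₜ[k] s) (b ⊗ₜ[k] t)
      = TensorProduct.map (LinearMap.mulLeft k a) (LinearMap.mulRight k t) (R (s ⊗ₜ[k] b)) := by
  rw [factMul_left, factInner_tmul, mapmap]
  simp

lemma factMul_add_left (x x' y : A ⊗[k] S) :
    factMul R (x + x') y = factMul R x y + factMul R x' y := by
  simp only [factMul, add_tmul, map_add]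

lemma factMul_add_right (x y y' : A ⊗[k] S) :
    factMul R x (y + y') = factMul R x y + factMul R x y' := by
  simp only [factMul, tmul_add, map_add]

lemma factMul_zero_left (y : A ⊗[k] S) : factMul R 0 y = 0 := by
  simp only [factMul, zero_tmul, map_zero]

lemma factMul_zero_right (x : A ⊗[k] S) : factMul R x 0 = 0 := by
  simp only [factMul, tmul_zero, map_zero]

lemma factMul_right (x : A ⊗[k] S) (b : A) (t : S) :
    factMul R x (b ⊗ₜ[k] t)
      = TensorProduct.map LinearMap.id (LinearMap.mulRight k t) (factInner2 R b x) := by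
  induction x using TensorProduct.induction_on with
  | zero => simp [factMul_zero_left]
  | tmul a s => rw [factMul_tmul, factInner2_tmul, mapmap]; simp
  | add x x' hx hx' => rw [factMul_add_left, map_add, map_add, hx, hx']

lemma factInner_map_right (s : S) (u : S) (z : A ⊗[k] S) :
    factInner R (s ⊗ₜ[k] TensorProduct.map LinearMap.id (LinearMap.mulRight k u) z)
      = TensorProduct.map LinearMap.id (LinearMap.mulRight k u) (factInner R (s ⊗ₜ[k] z)) := by
  induction z using TensorProduct.induction_on with
  | zero => simp
  | tmul c v =>
    simp only [map_tmul, LinearMap.id_coe, id_eq, LinearMap.mulRight_apply, factInner_tmul,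
      mapmap]
    rw [LinearMap.mulRight_mul]
    simp
  | add z z' hz hz' => simp only [map_add, tmul_add, hz, hz']

lemma factInner2_map_left (c : A) (a : A) (z : A ⊗[k] S) :
    factInner2 R c (TensorProduct.map (LinearMap.mulLeft k a) LinearMap.id z)
      = TensorProduct.map (LinearMap.mulLeft k a) LinearMap.id (factInner2 R c z) := by
  induction z using TensorProduct.induction_on with
  | zero => simp
  | tmul d v =>
    simp only [map_tmul, LinearMap.id_coe, id_eq, LinearMap.mulLeft_apply, factInner2_tmul,
      mapmap]
    rw [LinearMap.mulLeft_mul]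
    simp
  | add z z' hz hz' => simp only [map_add, tmul_add, hz, hz']

def rAct (w : A ⊗[k] S) : A →ₗ[k] A ⊗[k] S :=
  LinearMap.rTensor S (LinearMap.mul' k A) ∘ₗ (TensorProduct.assoc k A A S).symm.toLinearMap ∘ₗ
    LinearMap.lTensor A R ∘ₗ (TensorProduct.assoc k A S A).toLinearMap ∘ₗ
    TensorProduct.mk k (A ⊗[k] S) A w

lemma rAct_tmul (d : A) (v : S) (e : A) :
    rAct R (d ⊗ₜ[k] v) e
      = TensorProduct.map (LinearMap.mulLeft k d) LinearMap.id (R (v ⊗ₜ[k] e)) := by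
  simp only [rAct, LinearMap.coe_comp, Function.comp_apply, LinearEquiv.coe_coe,
    TensorProduct.mk_apply, assoc_tmul, LinearMap.lTensor_tmul]
  exact mulmapA _ _

lemma rAct_add (w w' : A ⊗[k] S) : rAct R (w + w') = rAct R w + rAct R w' := by
  ext e
  simp only [rAct, LinearMap.coe_comp, Function.comp_apply, LinearEquiv.coe_coe,
    TensorProduct.mk_apply, LinearMap.add_apply, add_tmul, map_add]

lemma rAct_zero : rAct R (0 : A ⊗[k] S) = 0 := by
  ext e
  simp [rAct]

lemma factInner2_eq_rAct (b : A) (w : A ⊗[k] S) : factInner2 R b w = rAct R w b := by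
  induction w using TensorProduct.induction_on with
  | zero => simp [rAct_zero]
  | tmul a s => rw [factInner2_tmul, rAct_tmul]
  | add w w' hw hw' => rw [map_add, rAct_add, hw, hw']; rfl

def lAct (y : A ⊗[k] S) : S →ₗ[k] A ⊗[k] S :=
  factInner R ∘ₗ (TensorProduct.mk k S (A ⊗[k] S)).flip y

lemma lAct_apply (y : A ⊗[k] S) (v : S) : lAct R y v = factInner R (v ⊗ₜ[k] y) := rfl

lemma lAct_add (y y' : A ⊗[k] S) : lAct R (y + y') = lAct R y + lAct R y' := by
  ext v
  simp [lAct_apply, tmul_add]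

def auxA (f : S →ₗ[k] A ⊗[k] S) : A ⊗[k] S →ₗ[k] A ⊗[k] S :=
  LinearMap.rTensor S (LinearMap.mul' k A) ∘ₗ (TensorProduct.assoc k A A S).symm.toLinearMap ∘ₗ
    LinearMap.lTensor A f

lemma auxA_tmul (f : S →ₗ[k] A ⊗[k] S) (d : A) (v : S) :
    auxA f (d ⊗ₜ[k] v) = TensorProduct.map (LinearMap.mulLeft k d) LinearMap.id (f v) := by
  simp only [auxA, LinearMap.coe_comp, Function.comp_apply, LinearEquiv.coe_coe,
    LinearMap.lTensor_tmul]
  exact mulmapA _ _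

lemma auxA_add (f g : S →ₗ[k] A ⊗[k] S) (w : A ⊗[k] S) :
    auxA (f + g) w = auxA f w + auxA g w := by
  simp only [auxA, LinearMap.coe_comp, Function.comp_apply, LinearEquiv.coe_coe,
    LinearMap.lTensor_add, LinearMap.add_apply, map_add]

def auxS (g : A →ₗ[k] A ⊗[k] S) : A ⊗[k] S →ₗ[k] A ⊗[k] S :=
  LinearMap.lTensor A (LinearMap.mul' k S) ∘ₗ (TensorProduct.assoc k A S S).toLinearMap ∘ₗ
    LinearMap.rTensor S g

lemma auxS_tmul (g : A →ₗ[k] A ⊗[k] S) (e : A) (f : S) :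
    auxS g (e ⊗ₜ[k] f) = TensorProduct.map LinearMap.id (LinearMap.mulRight k f) (g e) := by
  simp only [auxS, LinearMap.coe_comp, Function.comp_apply, LinearEquiv.coe_coe,
    LinearMap.rTensor_tmul]
  exact mulmapS _ _

lemma auxS_add (g g' : A →ₗ[k] A ⊗[k] S) (w : A ⊗[k] S) :
    auxS (g + g') w = auxS g w + auxS g' w := by
  simp only [auxS, LinearMap.coe_comp, Function.comp_apply, LinearEquiv.coe_coe,
    LinearMap.rTensor_add, LinearMap.add_apply, map_add]

lemma cross (w w' : A ⊗[k] S) :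
    auxA (lAct R w') w = auxS (rAct R w) w' := by
  induction w' using TensorProduct.induction_on with
  | zero =>
    have h0 : lAct R (0 : A ⊗[k] S) = 0 := by ext v; simp [lAct_apply]
    rw [h0]
    have : auxA (0 : S →ₗ[k] A ⊗[k] S) w = 0 := by
      simp [auxA]
    rw [this, map_zero]
  | tmul e f =>
    rw [auxS_tmul]
    induction w using TensorProduct.induction_on with
    | zero => simp [rAct_zero]
    | tmul d v =>
      rw [auxA_tmul, rAct_tmul, lAct_apply, factInner_tmul, mapmap, mapmap]
      simp
    | add w1 w2 h1 h2 => rw [map_add, h1, h2, rAct_add, LinearMap.add_apply, map_add]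
  | add y1 y2 h1 h2 =>
    rw [lAct_add, auxA_add, h1, h2, ← map_add]

variable {R}

section Conds

variable (h3 : ∀ (s t : S) (a : A),
      R ((s * t) ⊗ₜ[k] a) = factInner R (s ⊗ₜ[k] R (t ⊗ₜ[k] a)))
    (h4 : ∀ (s : S) (a b : A),
      R (s ⊗ₜ[k] (a * b)) = factInner2 R b (R (s ⊗ₜ[k] a)))

include h3 in
lemma L1 (c : A) (t : S) (z : A ⊗[k] S) :
    factInner2 R c (TensorProduct.map LinearMap.id (LinearMap.mulRight k t) z)
      = auxA (lAct R (R (t ⊗ₜ[k] c))) z := by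
  induction z using TensorProduct.induction_on with
  | zero => simp
  | tmul d v =>
    simp only [map_tmul, LinearMap.id_coe, id_eq, LinearMap.mulRight_apply]
    rw [factInner2_tmul, h3 v t c, auxA_tmul, lAct_apply]
  | add z z' hz hz' => simp only [map_add, hz, hz']

include h4 in
lemma R1 (s : S) (b : A) (z : A ⊗[k] S) :
    factInner R (s ⊗ₜ[k] TensorProduct.map (LinearMap.mulLeft k b) LinearMap.id z)
      = auxS (rAct R (R (s ⊗ₜ[k] b))) z := by
  induction z using TensorProduct.induction_on with
  | zero => simp
  | tmul e f =>
    simp only [map_tmul, LinearMap.id_coe, id_eq, LinearMap.mulLeft_apply]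
    rw [factInner_tmul, h4 s b e, auxS_tmul, factInner2_eq_rAct]
  | add z z' hz hz' => simp only [map_add, tmul_add, hz, hz']

include h3 h4 in
lemma commE (s : S) (c : A) (y : A ⊗[k] S) :
    factInner2 R c (factInner R (s ⊗ₜ[k] y))
      = factInner R (s ⊗ₜ[k] factInner2 R c y) := by
  induction y using TensorProduct.induction_on with
  | zero => simp
  | tmul b t =>
    rw [factInner_tmul, factInner2_tmul, L1 h3, R1 h4, cross]
  | add y y' hy hy' => simp only [tmul_add, map_add, hy, hy']

include h3 h4 in
lemma assoc_of (x y z : A ⊗[k] S) :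
    factMul R (factMul R x y) z = factMul R x (factMul R y z) := by
  induction z using TensorProduct.induction_on with
  | zero => simp [factMul_zero_right]
  | tmul c u =>
    induction x using TensorProduct.induction_on with
    | zero => simp [factMul_zero_left]
    | tmul a s =>
      rw [factMul_right, factMul_left, factInner2_map_left, factMul_right, factMul_left,
        factInner_map_right, commE h3 h4, mapmap, mapmap]
      simp
    | add x x' hx hx' =>
      rw [factMul_add_left, factMul_add_left, factMul_add_left, hx, hx']
  | add z z' hz hz' =>
    rw [factMul_add_right, factMul_add_right, factMul_add_right, hz, hz']

end Conds

end FactAux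

open FactAux in
/-- The multiplication `(a ⊗ s)(b ⊗ t) = a b_R ⊗ s_R t` on `A ⊗ S` is associative
with unit `1 ⊗ 1` iff `R` satisfies the four factorization conditions. -/
theorem factorization_structure_iff (R : S ⊗[k] A →ₗ[k] A ⊗[k] S) :
    ((∀ x y z : A ⊗[k] S, factMul R (factMul R x y) z = factMul R x (factMul R y z)) ∧
      (∀ x : A ⊗[k] S, factMul R ((1 : A) ⊗ₜ[k] (1 : S)) x = x) ∧
      (∀ x : A ⊗[k] S, factMul R x ((1 : A) ⊗ₜ[k] (1 : S)) = x)) ↔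
    ((∀ s : S, R (s ⊗ₜ[k] (1 : A)) = (1 : A) ⊗ₜ[k] s) ∧
      (∀ a : A, R ((1 : S) ⊗ₜ[k] a) = a ⊗ₜ[k] (1 : S)) ∧
      (∀ (s t : S) (a : A),
        R ((s * t) ⊗ₜ[k] a) = factInner R (s ⊗ₜ[k] R (t ⊗ₜ[k] a))) ∧
      (∀ (s : S) (a b : A),
        R (s ⊗ₜ[k] (a * b)) = factInner2 R b (R (s ⊗ₜ[k] a)))) := by
  constructor
  · rintro ⟨hassoc, hul, hur⟩
    have h1 : ∀ s : S, R (s ⊗ₜ[k] (1 : A)) = (1 : A) ⊗ₜ[k] s := by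
      intro s
      have := hur ((1 : A) ⊗ₜ[k] s)
      rwa [factMul_tmul, LinearMap.mulLeft_one, LinearMap.mulRight_one,
        TensorProduct.map_id, LinearMap.id_apply] at this
    have h2 : ∀ a : A, R ((1 : S) ⊗ₜ[k] a) = a ⊗ₜ[k] (1 : S) := by
      intro a
      have := hul (a ⊗ₜ[k] (1 : S))
      rwa [factMul_tmul, LinearMap.mulLeft_one, LinearMap.mulRight_one,
        TensorProduct.map_id, LinearMap.id_apply] at this
    refine ⟨h1, h2, ?_, ?_⟩
    · intro s t a
      have key := hassoc ((1 : A) ⊗ₜ[k] s) ((1 : A) ⊗ₜ[k] t) (a ⊗ₜ[k] (1 : S))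
      have e1 : factMul R ((1 : A) ⊗ₜ[k] s) ((1 : A) ⊗ₜ[k] t) = (1 : A) ⊗ₜ[k] (s * t) := by
        rw [factMul_tmul, h1 s, LinearMap.mulLeft_one]
        simp
      have e2 : factMul R ((1 : A) ⊗ₜ[k] t) (a ⊗ₜ[k] (1 : S)) = R (t ⊗ₜ[k] a) := by
        rw [factMul_tmul, LinearMap.mulLeft_one, LinearMap.mulRight_one,
          TensorProduct.map_id, LinearMap.id_apply]
      rw [e1, e2, factMul_tmul, LinearMap.mulLeft_one, LinearMap.mulRight_one,
        TensorProduct.map_id, LinearMap.id_apply, factMul_left, LinearMap.mulLeft_one,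
        TensorProduct.map_id, LinearMap.id_apply] at key
      exact key
    · intro s a b
      have key := hassoc ((1 : A) ⊗ₜ[k] s) (a ⊗ₜ[k] (1 : S)) (b ⊗ₜ[k] (1 : S))
      have e1 : factMul R ((1 : A) ⊗ₜ[k] s) (a ⊗ₜ[k] (1 : S)) = R (s ⊗ₜ[k] a) := by
        rw [factMul_tmul, LinearMap.mulLeft_one, LinearMap.mulRight_one,
          TensorProduct.map_id, LinearMap.id_apply]
      have e2 : factMul R (a ⊗ₜ[k] (1 : S)) (b ⊗ₜ[k] (1 : S)) = (a * b) ⊗ₜ[k] (1 : S) := by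
        rw [factMul_tmul, h2 b, LinearMap.mulRight_one]
        simp
      rw [e1, e2, factMul_right, LinearMap.mulRight_one, TensorProduct.map_id,
        LinearMap.id_apply, factMul_tmul, LinearMap.mulLeft_one, LinearMap.mulRight_one,
        TensorProduct.map_id, LinearMap.id_apply] at key
      exact key.symm
  · rintro ⟨h1, h2, h3, h4⟩
    refine ⟨assoc_of h3 h4, ?_, ?_⟩
    · intro x
      induction x using TensorProduct.induction_on with
      | zero => simp [factMul_zero_right]
      | tmul b t =>
        rw [factMul_tmul, h2 b, LinearMap.mulLeft_one]
        simp
      | add x x' hx hx' => rw [factMul_add_right, hx, hx']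
    · intro x
      induction x using TensorProduct.induction_on with
      | zero => simp [factMul_zero_left]
      | tmul a s =>
        rw [factMul_tmul, h1 s, LinearMap.mulRight_one]
        simp
      | add x x' hx hx' => rw [factMul_add_left, hx, hx']

end
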